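/- Let G be a connected simple graph on a finite nonempty vertex set V, let r ≥ 0 be a natural number, and suppose there exists a set S* ⊆ V with |S*| ≤ b such that every vertex of V is within distance r of S*. If (s_1, s_2, …) is a farthest-first traversal of G, then every vertex of V is within distance 2r of the set {s_1, …, s_b}. -/

import Mathlib

/-!
Suppose some vertex `v` is at distance more than `2r` from `s_1, …, s_b`. Then at every step
`j ≤ b` the traversal picks a vertex at least as far from its predecessors as `v` is, so
`s_1, …, s_{b+1}` are pairwise more than `2r` apart. But these `b + 1` vertices lie in the
`r`-balls around at most `b` centres, so two of them share a centre and are within `2r`.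
-/

/-- A sequence `s` (0-indexed; entry `j` plays the role of `s_{j+1}`) is a
burning sequence of length `k` for `G` if every vertex `v` is reachable from
some entry `s j` (with `j < k`) at distance at most `k - (j+1)`. -/
def IsBurningSeq {V : Type*} (G : SimpleGraph V) (k : ℕ) (s : ℕ → V) : Prop :=
  ∀ v : V, ∃ j, j < k ∧ G.Reachable (s j) v ∧ G.dist (s j) v ≤ k - (j + 1)

/-- The set `{s_1, …, s_n}` of the first `n` entries of the sequence `s`. -/
def prefixSet {V : Type*} (s : ℕ → V) (n : ℕ) : Set V := s '' Set.Iio n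

/-- Distance from a vertex to a set of vertices: `d(v,S) = min_{u ∈ S} d(v,u)`. -/
noncomputable def dSet {V : Type*} (G : SimpleGraph V) (v : V) (S : Set V) : ℕ :=
  sInf (G.dist v '' S)

/-- `s` is a farthest-first traversal of `G`: for every `i ≥ 1` (0-indexed),
`s i` realizes the maximum distance to the set of previously chosen vertices. -/
def IsFFT {V : Type*} (G : SimpleGraph V) (s : ℕ → V) : Prop :=
  ∀ i : ℕ, 1 ≤ i →
    dSet G (s i) (prefixSet s i) = sSup (Set.range fun v : V => dSet G v (prefixSet s i))

/-- The burning number: the minimum length of a burning sequence for `G`. -/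
noncomputable def burningNumber {V : Type*} (G : SimpleGraph V) : ℕ :=
  sInf {k | ∃ s : ℕ → V, IsBurningSeq G k s}

section FarthestFirst

variable {V : Type*} {G : SimpleGraph V}

lemma dSet_le_dist (v : V) {S : Set V} {u : V} (hu : u ∈ S) : dSet G v S ≤ G.dist v u :=
  Nat.sInf_le ⟨u, hu, rfl⟩

lemma exists_mem_dSet_eq (v : V) {S : Set V} (hS : S.Nonempty) :
    ∃ u ∈ S, dSet G v S = G.dist v u := by
  obtain ⟨u, hu, h⟩ := Nat.sInf_mem (hS.image (G.dist v))
  exact ⟨u, hu, h.symm⟩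

lemma IsFFT.dSet_le [Finite V] {s : ℕ → V} (hs : IsFFT G s) {i : ℕ} (hi : 1 ≤ i) (v : V) :
    dSet G v (prefixSet s i) ≤ dSet G (s i) (prefixSet s i) := by
  rw [hs i hi]
  exact le_csSup (Set.finite_range _).bddAbove ⟨v, rfl⟩

lemma IsFFT.lt_dist_of_forall_lt_dist [Finite V] {s : ℕ → V} (hs : IsFFT G s) {R n : ℕ}
    {v : V} (hv : ∀ j < n, R < G.dist v (s j)) {i j : ℕ} (hij : i < j) (hjn : j ≤ n) :
    R < G.dist (s i) (s j) := by
  have hj : 1 ≤ j := by omega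
  obtain ⟨_, ⟨k, hk, rfl⟩, hvk⟩ :=
    exists_mem_dSet_eq (G := G) (S := prefixSet s j) v ⟨s 0, 0, hj, rfl⟩
  have hfar : R < dSet G v (prefixSet s j) := hvk ▸ hv k (lt_of_lt_of_le hk hjn)
  calc R < dSet G (s j) (prefixSet s j) := hfar.trans_le (hs.dSet_le hj v)
    _ ≤ G.dist (s j) (s i) := dSet_le_dist (s j) ⟨i, hij, rfl⟩
    _ = G.dist (s i) (s j) := G.dist_comm

lemma SimpleGraph.Connected.exists_lt_dist_le_of_card_lt (hG : G.Connected) {r n : ℕ}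
    (t : Finset V) (ht : t.card < n) (hcov : ∀ v : V, ∃ u ∈ t, G.dist v u ≤ r)
    (s : ℕ → V) : ∃ i j, i < j ∧ j < n ∧ G.dist (s i) (s j) ≤ 2 * r := by
  choose c hct hc using hcov
  obtain ⟨i, hi, j, hj, hij, hcij⟩ :=
    Finset.exists_ne_map_eq_of_card_lt_of_maps_to (s := Finset.range n) (t := t)
      (by simpa using ht) (fun k _ => hct (s k))
  have hdist : ∀ {i j}, c (s i) = c (s j) → G.dist (s i) (s j) ≤ 2 * r := fun {i j} hcij =>
    calc G.dist (s i) (s j) ≤ G.dist (s i) (c (s i)) + G.dist (c (s j)) (s j) :=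
          hcij ▸ hG.dist_triangle
      _ ≤ r + r := add_le_add (hc _) (G.dist_comm ▸ hc _)
      _ = 2 * r := (two_mul r).symm
  rw [Finset.mem_range] at hi hj
  rcases Nat.lt_or_gt_of_ne hij with h | h
  · exact ⟨i, j, h, hj, hdist hcij⟩
  · exact ⟨j, i, h, hi, hdist hcij.symm⟩

end FarthestFirst

theorem stmt2_general {V : Type*} [Fintype V] (G : SimpleGraph V) (hG : G.Connected)
    (r b : ℕ) (Sstar : Finset V) (hcard : Sstar.card ≤ b)
    (hcov : ∀ v : V, ∃ u ∈ Sstar, G.dist v u ≤ r)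
    (s : ℕ → V) (hs : IsFFT G s) :
    ∀ v : V, ∃ j, j < b ∧ G.dist v (s j) ≤ 2 * r := by
  intro v
  by_contra! hv
  obtain ⟨i, j, hij, hjb, hclose⟩ :=
    hG.exists_lt_dist_le_of_card_lt Sstar (Nat.lt_succ_of_le hcard) hcov s
  exact (hs.lt_dist_of_forall_lt_dist hv hij (Nat.le_of_lt_succ hjb)).not_ge hclose

/-- if some set `S*` of at most `b` vertices covers every vertex
within radius `r`, then the first `b` vertices of any farthest-first traversal
cover every vertex within radius `2r`. -/
theorem stmt2 {V : Type*} [Fintype V] [Nonempty V] (G : SimpleGraph V) (hG : G.Connected)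
    (r b : ℕ) (Sstar : Finset V) (hcard : Sstar.card ≤ b)
    (hcov : ∀ v : V, ∃ u ∈ Sstar, G.dist v u ≤ r)
    (s : ℕ → V) (hs : IsFFT G s) :
    ∀ v : V, ∃ j, j < b ∧ G.dist v (s j) ≤ 2 * r :=
  stmt2_general G hG r b Sstar hcard hcov s hs
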